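/- arXiv:2401.14668 — 2 statements merged into one kernel-verified Lean document; each statement's English description precedes it below -/
import Mathlib

section
/- For n ≥ 3 and t = C(n,2) − 1, for each 0 ≤ j ≤ t − 1, there is exactly one Dyck path π of semilength n with area(π) = t − j and bounce(π) = 1 + j. -/
/-- A Dyck path of semilength `n`, encoded as a list of steps
(`true` = north, `false` = east), staying weakly above the diagonal. -/
def IsDyck (n : ℕ) (w : List Bool) : Prop :=
  w.length = 2 * n ∧ w.count true = n ∧
    ∀ k, (w.take k).count false ≤ (w.take k).count true

/-- The area of a Dyck path: the number of whole unit cells between the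
path and the diagonal (on each north step, the current number of east
steps is subtracted from the current number of north steps). -/
def area (w : List Bool) : ℕ :=
  (w.foldl
    (fun (p : ℕ × ℕ × ℕ) s =>
      if s then (p.1 + (p.2.1 - p.2.2), p.2.1 + 1, p.2.2)
      else (p.1, p.2.1, p.2.2 + 1)) (0, 0, 0)).1

/-- `hgt w b` is the number of north steps of `w` preceding its `(b+1)`-st
east step, i.e. the height at which the bounce path heading north along
the line `x = b` meets an east step of `w`. -/
def hgt : List Bool → ℕ → ℕ
  | [], _ => 0
  | true :: w, b => hgt w b + 1
  | false :: _, 0 => 0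
  | false :: w, b + 1 => hgt w b

/-- The `i`-th bounce point (a height on the diagonal) of a Dyck path. -/
def bpt (w : List Bool) (i : ℕ) : ℕ := (hgt w)^[i] 0

/-- The bounce statistic of a Dyck path of semilength `n`:
`∑ (n - b_i)` over the successive bounce points `b_i`, `i ≥ 1`
(once the bounce path reaches `n` the terms vanish). -/
def bounce (n : ℕ) (w : List Bool) : ℕ :=
  ∑ i ∈ Finset.range n, (n - bpt w (i + 1))

/-- The Dyck path `N^{α₁}E^{α₁} ⋯ N^{α_ℓ}E^{α_ℓ}` of a composition `α`. -/
def pComp (α : List ℕ) : List Bool :=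
  α.foldr (fun a acc => List.replicate a true ++ List.replicate a false ++ acc) []


/-- `eaux c w` : for each north step of `w`, the number of east steps preceding it,
starting the east-step count at `c`. -/
def eaux : ℕ → List Bool → List ℕ
  | _, [] => []
  | c, true :: w => c :: eaux c w
  | c, false :: w => eaux (c + 1) w

/-- partial-sum style area function on the east-count list. -/
def asum : ℕ → List ℕ → ℕ
  | _, [] => 0
  | N, x :: l => (N - x) + asum (N + 1) l

lemma eaux_length (w : List Bool) : ∀ c, (eaux c w).length = w.count true := by
  induction w with
  | nil => intro c; simp [eaux]
  | cons a w ih =>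
    intro c
    cases a <;> simp [eaux, ih, List.count_cons]

lemma eaux_ge (w : List Bool) : ∀ c, ∀ x ∈ eaux c w, c ≤ x := by
  induction w with
  | nil => intro c x hx; simp [eaux] at hx
  | cons a w ih =>
    intro c x hx
    cases a
    · exact le_trans (Nat.le_succ c) (ih (c+1) x hx)
    · simp only [eaux, List.mem_cons] at hx
      rcases hx with rfl | hx
      · exact le_refl x
      · exact ih c x hx

lemma eaux_le (w : List Bool) : ∀ c, ∀ x ∈ eaux c w, x ≤ c + w.count false := by
  induction w with
  | nil => intro c x hx; simp [eaux] at hx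
  | cons a w ih =>
    intro c x hx
    cases a
    · have := ih (c+1) x hx
      simp [List.count_cons]
      omega
    · simp only [eaux, List.mem_cons] at hx
      rcases hx with rfl | hx
      · omega
      · have := ih c x hx
        simp [List.count_cons]
        omega

lemma eaux_sorted (w : List Bool) : ∀ c, (eaux c w).Pairwise (· ≤ ·) := by
  induction w with
  | nil => intro c; simp [eaux]
  | cons a w ih =>
    intro c
    cases a
    · exact ih (c+1)
    · exact List.Pairwise.cons (fun x hx => eaux_ge w c x hx) (ih c)

lemma hgt_eaux (w : List Bool) : ∀ b c, hgt w b = (eaux c w).countP (fun x => decide (x ≤ b + c)) := by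
  induction w with
  | nil => intro b c; simp [hgt, eaux]
  | cons a w ih =>
    intro b c
    cases a
    · cases b with
      | zero =>
        simp only [hgt, eaux]
        symm
        rw [List.countP_eq_zero]
        intro x hx
        have := eaux_ge w (c+1) x hx
        simp; omega
      | succ b =>
        simp only [hgt, eaux]
        rw [ih b (c+1)]
        congr 1
        ext x
        congr 1
        simp; omega
    · simp only [hgt, eaux, List.countP_cons]
      rw [ih b c]
      simp

lemma area_eaux_aux (w : List Bool) : ∀ acc N E,
    (w.foldl
      (fun (p : ℕ × ℕ × ℕ) s =>
        if s then (p.1 + (p.2.1 - p.2.2), p.2.1 + 1, p.2.2)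
        else (p.1, p.2.1, p.2.2 + 1)) (acc, N, E)).1 = acc + asum N (eaux E w) := by
  induction w with
  | nil => intro acc N E; simp [eaux, asum]
  | cons a w ih =>
    intro acc N E
    cases a
    · simpa [eaux] using ih acc N (E+1)
    · simp only [List.foldl_cons, if_pos, eaux, asum]
      rw [ih (acc + (N - E)) (N+1) E]
      omega

lemma area_eaux (w : List Bool) : area w = asum 0 (eaux 0 w) := by
  simpa [area] using area_eaux_aux w 0 0 0

lemma asum_eq_sum (l : List ℕ) : ∀ N, asum N l = ∑ i ∈ Finset.range l.length, (N + i - l.getD i 0) := by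
  induction l with
  | nil => intro N; simp [asum]
  | cons x l ih =>
    intro N
    simp only [asum, List.length_cons, Finset.sum_range_succ']
    rw [ih (N+1)]
    simp only [List.getD_cons_succ, List.getD_cons_zero]
    have : ∑ i ∈ Finset.range l.length, (N + 1 + i - l.getD i 0)
        = ∑ i ∈ Finset.range l.length, (N + (i + 1) - l.getD i 0) := by
      apply Finset.sum_congr rfl
      intro i _
      congr 1
      omega
    rw [this]
    omega

lemma eaux_inj (w₁ : List Bool) : ∀ w₂ c, eaux c w₁ = eaux c w₂ →
    w₁.count false = w₂.count false → w₁ = w₂ := by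
  induction w₁ with
  | nil =>
    intro w₂ c he hc
    cases w₂ with
    | nil => rfl
    | cons b w' =>
      cases b
      · simp [List.count_cons] at hc
      · exfalso
        simp [eaux] at he
  | cons a w ih =>
    intro w₂ c he hc
    cases w₂ with
    | nil =>
      cases a
      · simp [List.count_cons] at hc
      · exfalso
        simp [eaux] at he
    | cons b w' =>
      cases a <;> cases b
      · -- false false
        simp only [eaux] at he
        simp only [List.count_cons, if_pos] at hc
        have := ih w' (c+1) he (by omega)
        rw [this]
      · -- false :: w, true :: w'
        exfalso
        simp only [eaux] at he
        have : c ∈ eaux (c+1) w := by rw [he]; exact List.mem_cons_self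
        have := eaux_ge w (c+1) c this
        omega
      · -- true :: w, false :: w'
        exfalso
        simp only [eaux] at he
        have : c ∈ eaux (c+1) w' := by rw [← he]; exact List.mem_cons_self
        have := eaux_ge w' (c+1) c this
        omega
      · -- true true
        simp only [eaux, List.cons.injEq] at he
        simp only [List.count_cons] at hc
        have := ih w' c he.2 (by omega)
        rw [this]

lemma sorted_countP_le {e : List ℕ} (hs : e.Pairwise (· ≤ ·)) {b i : ℕ}
    (h : i < e.countP (fun x => decide (x ≤ b))) : e.getD i 0 ≤ b := by
  induction e generalizing i with
  | nil => simp at h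
  | cons x l ih =>
    rw [List.pairwise_cons] at hs
    by_cases hx : x ≤ b
    · cases i with
      | zero => simpa using hx
      | succ i =>
        have hcc : (x :: l).countP (fun x => decide (x ≤ b)) = l.countP (fun x => decide (x ≤ b)) + 1 := by
          simp [List.countP_cons, hx]
        rw [hcc] at h
        have : i < l.countP (fun x => decide (x ≤ b)) := by
          rcases Nat.lt_or_ge i (l.countP (fun x => decide (x ≤ b))) with h' | h'
          · exact h'
          · exfalso; have := List.countP_le_length (l := l) (p := fun x => decide (x ≤ b)); omega
        simpa using ih hs.2 this
    · exfalso
      have : (x :: l).countP (fun x => decide (x ≤ b)) = 0 := by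
        rw [List.countP_eq_zero]
        intro y hy
        rcases List.mem_cons.1 hy with rfl | hy
        · simpa using hx
        · have := hs.1 y hy
          simp; omega
      omega

lemma sorted_countP_gt {e : List ℕ} (hs : e.Pairwise (· ≤ ·)) {b i : ℕ} (hi : i < e.length)
    (h : e.countP (fun x => decide (x ≤ b)) ≤ i) : b < e.getD i 0 := by
  induction e generalizing i with
  | nil => simp at hi
  | cons x l ih =>
    rw [List.pairwise_cons] at hs
    by_cases hx : x ≤ b
    · have hcc : (x :: l).countP (fun x => decide (x ≤ b)) = l.countP (fun x => decide (x ≤ b)) + 1 := by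
        simp [List.countP_cons, hx]
      rw [hcc] at h
      cases i with
      | zero =>
        exfalso
        have := List.countP_le_length (l := l) (p := fun x => decide (x ≤ b))
        omega
      | succ i =>
        simp only [List.length_cons, Nat.succ_lt_succ_iff] at hi
        simpa using ih hs.2 hi (by omega)
    · cases i with
      | zero => simpa using Nat.lt_of_not_le hx
      | succ i =>
        simp only [List.length_cons, Nat.succ_lt_succ_iff] at hi
        have hmem : l.getD i 0 ∈ l := by
          rw [List.getD_eq_getElem _ _ hi]
          exact List.getElem_mem hi
        have := hs.1 _ hmem
        simp only [List.getD_cons_succ]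
        omega

lemma count_true_add_count_false (w : List Bool) : w.count true + w.count false = w.length := by
  induction w with
  | nil => simp
  | cons a w ih => cases a <;> simp [List.count_cons] <;> omega

lemma hgt_ge_aux (w : List Bool) : ∀ s b, (∀ k, (w.take k).count false ≤ (w.take k).count true + s) →
    min (b + 1 - s) (w.count true) ≤ hgt w b := by
  induction w with
  | nil => intro s b _; simp [hgt]
  | cons a w ih =>
    intro s b hbal
    cases a
    · -- false
      have hs : 1 ≤ s := by have := hbal 1; simpa using this
      have hbal' : ∀ k, (w.take k).count false ≤ (w.take k).count true + (s - 1) := by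
        intro k
        have := hbal (k + 1)
        simp [List.count_cons] at this
        omega
      cases b with
      | zero =>
        simp only [hgt]
        omega
      | succ b =>
        have := ih (s-1) b hbal'
        simp only [hgt, List.count_cons, if_neg]
        simp
        omega
    · -- true
      have hbal' : ∀ k, (w.take k).count false ≤ (w.take k).count true + (s + 1) := by
        intro k
        have := hbal (k + 1)
        simp [List.count_cons] at this
        omega
      have := ih (s+1) b hbal'
      simp only [hgt, List.count_cons]
      simp
      omega

lemma hgt_ge {n : ℕ} {w : List Bool} (hw : IsDyck n w) : ∀ b, b + 1 ≤ n → b + 1 ≤ hgt w b := by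
  intro b hb
  have hbal : ∀ k, (w.take k).count false ≤ (w.take k).count true + 0 := by
    simpa using hw.2.2
  have := hgt_ge_aux w 0 b hbal
  rw [hw.2.1] at this
  omega

lemma count_false_eq {n : ℕ} {w : List Bool} (hw : IsDyck n w) : w.count false = n := by
  have := count_true_add_count_false w
  have h1 := hw.1
  have h2 := hw.2.1
  omega

lemma hgt_le (w : List Bool) (b : ℕ) : hgt w b ≤ w.count true := by
  rw [hgt_eaux w b 0, ← eaux_length w 0]
  exact List.countP_le_length

lemma hgt_mono (w : List Bool) {b b' : ℕ} (h : b ≤ b') : hgt w b ≤ hgt w b' := by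
  rw [hgt_eaux w b 0, hgt_eaux w b' 0]
  apply List.countP_mono_left
  intro x _ hx
  simp at hx ⊢
  omega

lemma hgt_top {n : ℕ} {w : List Bool} (hw : IsDyck n w) {b : ℕ} (hb : n ≤ b) : hgt w b = n := by
  rw [hgt_eaux w b 0]
  rw [List.countP_eq_length.2, eaux_length, hw.2.1]
  intro x hx
  have := eaux_le w 0 x hx
  rw [count_false_eq hw] at this
  simp
  omega

lemma bpt_succ (w : List Bool) (i : ℕ) : bpt w (i + 1) = hgt w (bpt w i) := by
  unfold bpt
  rw [Function.iterate_succ_apply']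

lemma bpt_le {n : ℕ} {w : List Bool} (hw : IsDyck n w) (i : ℕ) : bpt w i ≤ n := by
  cases i with
  | zero => simp [bpt]
  | succ i =>
    rw [bpt_succ]
    rw [← hw.2.1]
    exact hgt_le w _

lemma bpt_ge {n : ℕ} {w : List Bool} (hw : IsDyck n w) (i : ℕ) : min i n ≤ bpt w i := by
  induction i with
  | zero => simp
  | succ i ih =>
    rw [bpt_succ]
    rcases Nat.lt_or_ge (bpt w i) n with h | h
    · have := hgt_ge hw (bpt w i) (by omega)
      omega
    · rw [hgt_top hw h]
      omega

lemma bpt_mono {n : ℕ} {w : List Bool} (hw : IsDyck n w) {i j : ℕ} (h : i ≤ j) :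
    bpt w i ≤ bpt w j := by
  induction j with
  | zero => simp_all
  | succ j ih =>
    rcases Nat.lt_or_ge i (j+1) with h' | h'
    · have h1 : bpt w i ≤ bpt w j := ih (by omega)
      have h2 : bpt w j ≤ bpt w (j+1) := by
        rw [bpt_succ]
        rcases Nat.lt_or_ge (bpt w j) n with hb | hb
        · have := hgt_ge hw (bpt w j) (by omega); omega
        · have hble := bpt_le hw j
          have : bpt w j = n := by omega
          rw [this, hgt_top hw (le_refl n)]
        
      omega
    · have : i = j + 1 := by omega
      subst this; rfl

lemma bpt_strict {n : ℕ} {w : List Bool} (hw : IsDyck n w) {i : ℕ} (h : bpt w i < n) :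
    bpt w i < bpt w (i + 1) := by
  rw [bpt_succ]
  have := hgt_ge hw (bpt w i) (by omega)
  omega

/-- `cfun n w h` = number of indices `1 ≤ i ≤ n` with `bpt w i ≤ h`. -/
def cfun (n : ℕ) (w : List Bool) (h : ℕ) : ℕ :=
  ((Finset.range n).filter (fun i => bpt w (i + 1) ≤ h)).card

lemma filter_ge_card {n B : ℕ} (hB : B ≤ n) :
    ((Finset.range n).filter (fun h => B ≤ h)).card = n - B := by
  have : (Finset.range n).filter (fun h => B ≤ h) = Finset.Ico B n := by
    ext x
    simp [Finset.mem_filter, Finset.mem_range, Finset.mem_Ico]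
    omega
  rw [this, Nat.card_Ico]

lemma bounce_eq_sum_c {n : ℕ} {w : List Bool} (hw : IsDyck n w) :
    bounce n w = ∑ h ∈ Finset.range n, cfun n w h := by
  unfold bounce cfun
  have step : ∀ i ∈ Finset.range n, n - bpt w (i + 1)
      = ∑ h ∈ Finset.range n, (if bpt w (i+1) ≤ h then 1 else 0) := by
    intro i _
    rw [← Finset.card_filter]
    rw [filter_ge_card (bpt_le hw (i+1))]
  rw [Finset.sum_congr rfl step, Finset.sum_comm]
  apply Finset.sum_congr rfl
  intro h _
  rw [← Finset.card_filter]

lemma hgt_countP (w : List Bool) (b : ℕ) :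
    hgt w b = (eaux 0 w).countP (fun x => decide (x ≤ b)) := by
  simpa using hgt_eaux w b 0

lemma eaux_len_n {n : ℕ} {w : List Bool} (hw : IsDyck n w) : (eaux 0 w).length = n := by
  rw [eaux_length, hw.2.1]

lemma E_le_h {n : ℕ} {w : List Bool} (hw : IsDyck n w) {h : ℕ} (hh : h < n) :
    (eaux 0 w).getD h 0 ≤ h := by
  apply sorted_countP_le (eaux_sorted w 0)
  rw [← hgt_countP]
  exact hgt_ge hw h (by omega)

lemma E_ge_of_bpt {n : ℕ} {w : List Bool} (hw : IsDyck n w) :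
    ∀ i h, h < n → bpt w i ≤ h → i ≤ (eaux 0 w).getD h 0 := by
  intro i
  induction i with
  | zero => intro h _ _; omega
  | succ i ih =>
    intro h hh hb
    rw [bpt_succ, hgt_countP] at hb
    have hgt' : bpt w i < (eaux 0 w).getD h 0 := by
      apply sorted_countP_gt (eaux_sorted w 0)
      · rw [eaux_len_n hw]; exact hh
      · exact hb
    have h1 := bpt_ge hw i
    have h2 := E_le_h hw hh
    omega

lemma c_le_E {n : ℕ} {w : List Bool} (hw : IsDyck n w) {h : ℕ} (hh : h < n) :
    cfun n w h ≤ (eaux 0 w).getD h 0 := by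
  unfold cfun
  have hsub : (Finset.range n).filter (fun i => bpt w (i + 1) ≤ h)
      ⊆ Finset.range ((eaux 0 w).getD h 0) := by
    intro i hi
    simp only [Finset.mem_filter, Finset.mem_range] at hi ⊢
    have := E_ge_of_bpt hw (i+1) h hh hi.2
    omega
  have := Finset.card_le_card hsub
  rwa [Finset.card_range] at this

lemma c_ge_iff {n : ℕ} {w : List Bool} (hw : IsDyck n w) {r : ℕ} (hr : r ≤ n) (h : ℕ) :
    r ≤ cfun n w h ↔ bpt w r ≤ h := by
  cases r with
  | zero => simp [bpt]
  | succ r =>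
    constructor
    · intro hc
      by_contra hb
      push_neg at hb
      have hsub : (Finset.range n).filter (fun i => bpt w (i + 1) ≤ h) ⊆ Finset.range r := by
        intro i hi
        simp only [Finset.mem_filter, Finset.mem_range] at hi ⊢
        by_contra hir
        push_neg at hir
        have := bpt_mono hw (show r + 1 ≤ i + 1 by omega)
        omega
      have := Finset.card_le_card hsub
      rw [Finset.card_range] at this
      unfold cfun at hc
      omega
    · intro hb
      have hsub : Finset.range (r+1) ⊆ (Finset.range n).filter (fun i => bpt w (i + 1) ≤ h) := by
        intro i hi
        simp only [Finset.mem_filter, Finset.mem_range] at hi ⊢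
        refine ⟨by omega, ?_⟩
        have := bpt_mono hw (show i + 1 ≤ r + 1 by omega)
        omega
      have := Finset.card_le_card hsub
      rw [Finset.card_range] at this
      unfold cfun
      omega

lemma area_eq_sum {n : ℕ} {w : List Bool} (hw : IsDyck n w) :
    area w = ∑ h ∈ Finset.range n, (h - (eaux 0 w).getD h 0) := by
  rw [area_eaux, asum_eq_sum, eaux_len_n hw]
  apply Finset.sum_congr rfl
  intro h _
  congr 1
  omega

lemma sum_range_id_choose (n : ℕ) : ∑ h ∈ Finset.range n, h = n.choose 2 := by
  have h1 := Finset.sum_range_id_mul_two n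
  have h2 := Nat.choose_two_right n
  set P := n * (n - 1)
  omega

lemma structure_of_eq {n : ℕ} {w : List Bool} (hw : IsDyck n w)
    (heq : ∀ h, h < n → (eaux 0 w).getD h 0 = cfun n w h)
    (hk1 : 1 ≤ bounce n w) :
    ∃ q m, q + 1 ≤ m ∧ m ≤ n - 1 ∧
      bounce n w = (∑ r ∈ Finset.range q, (n - (r+1))) + (n - m) ∧
      (∀ h, h < n → (eaux 0 w).getD h 0 = if m ≤ h then q + 1 else min h q) := by
  have hn1 : 1 ≤ n := by
    by_contra hn
    push_neg at hn
    interval_cases n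
    simp [bounce] at hk1
  -- the index ℓ where the bounce path first reaches n
  have hex : ∃ i, bpt w i = n := by
    refine ⟨n, le_antisymm (bpt_le hw n) ?_⟩
    have := bpt_ge hw n
    omega
  classical
  set ℓ := Nat.find hex with hℓdef
  have hℓ : bpt w ℓ = n := Nat.find_spec hex
  have hlt : ∀ i, i < ℓ → bpt w i < n := by
    intro i hi
    have h1 := Nat.find_min hex hi
    have h2 := bpt_le hw i
    omega
  have hℓn : ℓ ≤ n := by
    by_contra hc
    push_neg at hc
    have h1 := hlt n hc
    have h2 := bpt_ge hw n
    omega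
  have hℓ2 : 2 ≤ ℓ := by
    rcases Nat.lt_or_ge ℓ 2 with h | h
    · exfalso
      interval_cases ℓ
      · have : bpt w 0 = 0 := rfl
        omega
      · -- bpt w 1 = n : all bounce terms vanish
        have hall : ∀ i ∈ Finset.range n, n - bpt w (i+1) = 0 := by
          intro i _
          have h1 := bpt_mono hw (show 1 ≤ i + 1 by omega)
          have h2 := bpt_le hw (i+1)
          omega
        have : bounce n w = 0 := by
          unfold bounce
          exact Finset.sum_eq_zero hall
        omega
    · exact h
  -- strict monotonicity below ℓ
  have hstrict : ∀ i j, i < j → j ≤ ℓ → bpt w i < bpt w j := by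
    intro i j
    induction j with
    | zero => omega
    | succ j ih =>
      intro hij hjl
      have hj : bpt w j < n := hlt j (by omega)
      have hs := bpt_strict hw hj
      rcases Nat.lt_or_ge i j with h' | h'
      · have := ih h' (by omega)
        omega
      · have : i = j := by omega
        subst this
        exact hs
  -- c is bounded by ℓ - 1
  have hcle : ∀ h, h < n → cfun n w h ≤ ℓ - 1 := by
    intro h hh
    unfold cfun
    have hsub : (Finset.range n).filter (fun i => bpt w (i + 1) ≤ h) ⊆ Finset.range (ℓ - 1) := by
      intro i hi
      simp only [Finset.mem_filter, Finset.mem_range] at hi ⊢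
      by_contra hc
      push_neg at hc
      have : bpt w ℓ ≤ bpt w (i+1) := bpt_mono hw (by omega)
      omega
    have := Finset.card_le_card hsub
    rwa [Finset.card_range] at this
  -- all entries of the east-list are ≤ ℓ - 1
  have hEle : ∀ x ∈ eaux 0 w, x ≤ ℓ - 1 := by
    intro x hx
    rw [List.mem_iff_getElem] at hx
    obtain ⟨h, hh, hx⟩ := hx
    rw [eaux_len_n hw] at hh
    have : (eaux 0 w).getD h 0 = x := by
      rw [List.getD_eq_getElem _ _ (by rw [eaux_len_n hw]; exact hh)]
      exact hx
    rw [← this, heq h hh]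
    exact hcle h hh
  -- key1 : once the bounce point reaches ℓ-1, next is n
  have hkey1 : ∀ i, ℓ - 1 ≤ bpt w i → bpt w (i+1) = n := by
    intro i hi
    rw [bpt_succ, hgt_countP]
    rw [List.countP_eq_length.2, eaux_len_n hw]
    intro x hx
    have := hEle x hx
    simp
    omega
  -- key2 : bpt w i = i for i + 2 ≤ ℓ
  have hkey2 : ∀ i, i + 2 ≤ ℓ → bpt w i = i := by
    intro i hi
    have hBle : bpt w i ≤ ℓ - 2 := by
      by_contra hc
      push_neg at hc
      have := hkey1 i (by omega)
      have := hlt (i+1) (by omega)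
      omega
    set B := bpt w i with hB
    -- show bpt w (i+1) = bpt w (B+1)
    set C := bpt w (i+1) with hC
    have hCcount : C = (eaux 0 w).countP (fun x => decide (x ≤ B)) := by
      rw [hC, bpt_succ, hgt_countP]
    have hCn : C < n := hlt (i+1) (by omega)
    have hBn : B + 1 ≤ n := by omega
    have h1 : bpt w (B+1) ≤ C := by
      have hEC : B < (eaux 0 w).getD C 0 := by
        apply sorted_countP_gt (eaux_sorted w 0)
        · rw [eaux_len_n hw]; exact hCn
        · omega
      rw [heq C hCn] at hEC
      exact (c_ge_iff hw hBn C).1 (by omega)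
    have h2 : C ≤ bpt w (B+1) := by
      by_contra hc
      push_neg at hc
      set h := bpt w (B+1) with hhd
      have hhn : h < n := by omega
      have hEh : (eaux 0 w).getD h 0 ≤ B := by
        apply sorted_countP_le (eaux_sorted w 0)
        omega
      rw [heq h hhn] at hEh
      have : bpt w (B+1) ≤ h := le_refl h
      have := (c_ge_iff hw hBn h).2 this
      omega
    have hCB : C = bpt w (B+1) := by omega
    -- injectivity via strict monotonicity
    rcases Nat.lt_trichotomy (i+1) (B+1) with h | h | h
    · exfalso
      have := hstrict (i+1) (B+1) h (by omega)
      omega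
    · omega
    · exfalso
      have := hstrict (B+1) (i+1) h (by omega)
      omega
  -- define q and m
  refine ⟨ℓ - 2, bpt w (ℓ - 1), ?_, ?_, ?_, ?_⟩
  · have := bpt_ge hw (ℓ - 1)
    omega
  · have := hlt (ℓ - 1) (by omega)
    omega
  · -- bounce value
    set q := ℓ - 2 with hq
    set m := bpt w (ℓ - 1) with hm
    have hbv : ∀ i ∈ Finset.range n, n - bpt w (i+1)
        = (if i < q then n - (i+1) else 0) + (if i = q then n - m else 0) := by
      intro i _
      rcases Nat.lt_trichotomy i q with h | h | h
      · have : bpt w (i+1) = i + 1 := hkey2 (i+1) (by omega)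
        rw [this, if_pos h, if_neg (by omega)]
        omega
      · have : i + 1 = ℓ - 1 := by omega
        rw [this, if_neg (by omega), if_pos h]
        omega
      · have : bpt w (i+1) = n := by
          have h1 : bpt w ℓ ≤ bpt w (i+1) := bpt_mono hw (by omega)
          have h2 := bpt_le hw (i+1)
          omega
        rw [this, if_neg (by omega), if_neg (by omega)]
        omega
    unfold bounce
    rw [Finset.sum_congr rfl hbv, Finset.sum_add_distrib]
    congr 1
    · rw [← Finset.sum_subset (Finset.range_subset_range.2 (show q ≤ n by omega))
        (fun x _ hx => by rw [if_neg (by simp at hx ⊢; omega)])]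
      apply Finset.sum_congr rfl
      intro i hi
      simp only [Finset.mem_range] at hi
      rw [if_pos hi]
    · rw [Finset.sum_ite_eq' (Finset.range n) q (fun _ => n - m)]
      rw [if_pos (by simp; omega)]
  · -- the east-list formula
    set q := ℓ - 2 with hq
    set m := bpt w (ℓ - 1) with hm
    intro h hh
    rw [heq h hh]
    have hq1m : bpt w (q + 1) = m := by
      rw [hm]; congr 1; omega
    by_cases hmh : m ≤ h
    · rw [if_pos hmh]
      have hge : q + 1 ≤ cfun n w h := by
        apply (c_ge_iff hw (show q + 1 ≤ n by omega) h).2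
        rw [hq1m]; exact hmh
      have hle := hcle h hh
      omega
    · rw [if_neg hmh]
      push_neg at hmh
      have hcq : cfun n w h ≤ q := by
        by_contra hc
        push_neg at hc
        have := (c_ge_iff hw (show q + 1 ≤ n by omega) h).1 (by omega)
        omega
      have hch : cfun n w h ≤ h := by
        by_contra hc
        push_neg at hc
        have := (c_ge_iff hw (show h + 1 ≤ n by omega) h).1 (by omega)
        have hb := bpt_ge hw (h+1)
        omega
      have hcge : min h q ≤ cfun n w h := by
        rcases le_or_gt h q with h' | h'
        · have : bpt w h = h := hkey2 h (by omega)
          have := (c_ge_iff hw (show h ≤ n by omega) h).2 (by omega)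
          omega
        · have : bpt w q = q := hkey2 q (by omega)
          have := (c_ge_iff hw (show q ≤ n by omega) h).2 (by omega)
          omega
      omega

def stair : ℕ → List Bool
  | 0 => []
  | q + 1 => true :: false :: stair q

def wpath (n q m : ℕ) : List Bool :=
  stair q ++ (List.replicate (m - q) true ++
    (false :: (List.replicate (n - m) true ++ List.replicate (n - q - 1) false)))

def estar (n q m : ℕ) : List ℕ :=
  List.range q ++ (List.replicate (m - q) q ++ List.replicate (n - m) (q + 1))

def fb (n q : ℕ) : ℕ := ∑ r ∈ Finset.range q, (n - (r + 1))

lemma stair_count_true (q : ℕ) : (stair q).count true = q := by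
  induction q with
  | zero => simp [stair]
  | succ q ih => simp [stair, List.count_cons, ih]

lemma stair_count_false (q : ℕ) : (stair q).count false = q := by
  induction q with
  | zero => simp [stair]
  | succ q ih => simp [stair, List.count_cons, ih]

lemma stair_length (q : ℕ) : (stair q).length = 2 * q := by
  induction q with
  | zero => simp [stair]
  | succ q ih => simp [stair, ih]; omega

lemma eaux_append (A : List Bool) : ∀ B c,
    eaux c (A ++ B) = eaux c A ++ eaux (c + A.count false) B := by
  induction A with
  | nil => intro B c; simp [eaux]
  | cons a A ih =>
    intro B c
    cases a
    · show eaux (c+1) (A ++ B) = eaux (c+1) A ++ eaux (c + (false :: A).count false) B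
      rw [ih]
      have hc : c + (false :: A).count false = (c + 1) + A.count false := by
        simp [List.count_cons]
        omega
      rw [hc]
    · show c :: eaux c (A ++ B) = c :: eaux c A ++ eaux (c + (true :: A).count false) B
      rw [ih]
      have hc : c + (true :: A).count false = c + A.count false := by
        simp [List.count_cons]
      rw [hc, List.cons_append]

lemma eaux_stair (q : ℕ) : ∀ c, eaux c (stair q) = List.range' c q := by
  induction q with
  | zero => intro c; simp [stair, eaux]
  | succ q ih =>
    intro c
    simp only [stair, eaux, ih, List.range'_succ]

lemma eaux_replicate_true (a : ℕ) : ∀ c, eaux c (List.replicate a true) = List.replicate a c := by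
  induction a with
  | zero => intro c; simp [eaux]
  | succ a ih => intro c; simp [List.replicate_succ, eaux, ih]

lemma eaux_replicate_false (a : ℕ) : ∀ c, eaux c (List.replicate a false) = [] := by
  induction a with
  | zero => intro c; simp [eaux]
  | succ a ih => intro c; simp [List.replicate_succ, eaux, ih]

lemma eaux_wpath {n q m : ℕ} (hqm : q + 1 ≤ m) :
    eaux 0 (wpath n q m) = estar n q m := by
  unfold wpath estar
  rw [eaux_append, eaux_stair, stair_count_false]
  rw [eaux_append, eaux_replicate_true]
  simp only [List.count_replicate]
  have h1 : (0 : ℕ) + q = q := by omega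
  have h2 : q + (if (true == false) = true then m - q else 0) = q := by simp
  rw [h1, h2]
  have : eaux q (false :: (List.replicate (n - m) true ++ List.replicate (n - q - 1) false))
      = List.replicate (n - m) (q + 1) := by
    show eaux (q + 1) (List.replicate (n - m) true ++ List.replicate (n - q - 1) false)
      = List.replicate (n - m) (q + 1)
    rw [eaux_append, eaux_replicate_true, eaux_replicate_false, List.append_nil]
  rw [this, List.range_eq_range']

lemma wpath_count_true {n q m : ℕ} (hqm : q + 1 ≤ m) (hmn : m ≤ n) :
    (wpath n q m).count true = n := by
  unfold wpath
  simp [List.count_append, List.count_cons, stair_count_true, List.count_replicate]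
  omega

lemma wpath_count_false {n q m : ℕ} (hqm : q + 1 ≤ m) (hmn : m ≤ n) :
    (wpath n q m).count false = n := by
  unfold wpath
  simp [List.count_append, List.count_cons, stair_count_false, List.count_replicate]
  omega

lemma wpath_length {n q m : ℕ} (hqm : q + 1 ≤ m) (hmn : m ≤ n) :
    (wpath n q m).length = 2 * n := by
  unfold wpath
  simp [List.length_append, stair_length]
  omega

-- balance lemmas
lemma bal_cons_true {w : List Bool} {s : ℕ}
    (h : ∀ k, (w.take k).count false ≤ (w.take k).count true + (s + 1)) :
    ∀ k, ((true :: w).take k).count false ≤ ((true :: w).take k).count true + s := by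
  intro k
  cases k with
  | zero => simp
  | succ k =>
    simp only [List.take_succ_cons, List.count_cons]
    have := h k
    simp
    omega

lemma bal_cons_false {w : List Bool} {s : ℕ} (hs : 1 ≤ s)
    (h : ∀ k, (w.take k).count false ≤ (w.take k).count true + (s - 1)) :
    ∀ k, ((false :: w).take k).count false ≤ ((false :: w).take k).count true + s := by
  intro k
  cases k with
  | zero => simp
  | succ k =>
    simp only [List.take_succ_cons, List.count_cons]
    have := h k
    simp
    omega

lemma bal_replicate_true {a : ℕ} {w : List Bool} {s : ℕ}
    (h : ∀ k, (w.take k).count false ≤ (w.take k).count true + (s + a)) :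
    ∀ k, ((List.replicate a true ++ w).take k).count false
      ≤ ((List.replicate a true ++ w).take k).count true + s := by
  induction a generalizing s with
  | zero => simpa using h
  | succ a ih =>
    rw [List.replicate_succ, List.cons_append]
    apply bal_cons_true
    apply ih
    intro k
    have := h k
    omega

lemma bal_replicate_false {a : ℕ} {w : List Bool} {s : ℕ} (hs : a ≤ s)
    (h : ∀ k, (w.take k).count false ≤ (w.take k).count true + (s - a)) :
    ∀ k, ((List.replicate a false ++ w).take k).count false
      ≤ ((List.replicate a false ++ w).take k).count true + s := by
  induction a generalizing s with
  | zero => simpa using h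
  | succ a ih =>
    rw [List.replicate_succ, List.cons_append]
    apply bal_cons_false (by omega)
    apply ih (by omega)
    intro k
    have := h k
    have : s - 1 - a = s - (a+1) := by omega
    omega

lemma bal_stair {q : ℕ} {w : List Bool} {s : ℕ}
    (h : ∀ k, (w.take k).count false ≤ (w.take k).count true + s) :
    ∀ k, ((stair q ++ w).take k).count false ≤ ((stair q ++ w).take k).count true + s := by
  induction q with
  | zero => simpa [stair] using h
  | succ q ih =>
    show ∀ k, (((true :: false :: stair q) ++ w).take k).count false ≤ _ + s
    simp only [List.cons_append]
    apply bal_cons_true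
    apply bal_cons_false (by omega)
    simpa using ih

lemma bal_nil (s : ℕ) : ∀ k, ((([] : List Bool)).take k).count false
    ≤ (([] : List Bool).take k).count true + s := by
  intro k; simp

lemma wpath_isDyck {n q m : ℕ} (hqm : q + 1 ≤ m) (hmn : m ≤ n - 1) (hn : 1 ≤ n) :
    IsDyck n (wpath n q m) := by
  refine ⟨wpath_length hqm (by omega), wpath_count_true hqm (by omega), ?_⟩
  unfold wpath
  have h0 : ∀ k, ((List.replicate (n - q - 1) false).take k).count false
      ≤ ((List.replicate (n - q - 1) false).take k).count true + (n - q - 1) := by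
    have := bal_replicate_false (a := n - q - 1) (w := ([] : List Bool)) (s := n - q - 1)
      (le_refl _) (bal_nil _)
    simpa using this
  have h1 : ∀ k, (((List.replicate (n - m) true ++ List.replicate (n - q - 1) false)).take k).count false
      ≤ (((List.replicate (n - m) true ++ List.replicate (n - q - 1) false)).take k).count true
        + (m - q - 1) := by
    apply bal_replicate_true
    intro k
    have := h0 k
    have heq : m - q - 1 + (n - m) = n - q - 1 := by omega
    omega
  have h2 : ∀ k, ((false :: (List.replicate (n - m) true ++ List.replicate (n - q - 1) false)).take k).count false
      ≤ ((false :: (List.replicate (n - m) true ++ List.replicate (n - q - 1) false)).take k).count true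
        + (m - q) := by
    apply bal_cons_false (by omega)
    intro k
    have := h1 k
    have : m - q - 1 = m - q - 1 := rfl
    omega
  have h3 : ∀ k, (((List.replicate (m - q) true ++
      (false :: (List.replicate (n - m) true ++ List.replicate (n - q - 1) false)))).take k).count false
      ≤ (((List.replicate (m - q) true ++
      (false :: (List.replicate (n - m) true ++ List.replicate (n - q - 1) false)))).take k).count true + 0 := by
    apply bal_replicate_true
    intro k
    have := h2 k
    omega
  have h4 := bal_stair (q := q) h3
  intro k
  have := h4 k
  omega

lemma countP_range (q b : ℕ) : (List.range q).countP (fun x => decide (x ≤ b)) = min (b+1) q := by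
  induction q with
  | zero => simp
  | succ q ih =>
    rw [List.range_succ, List.countP_append, ih]
    by_cases h : q ≤ b <;> simp [h] <;> omega

lemma countP_estar {n q m : ℕ} (b : ℕ) :
    (estar n q m).countP (fun x => decide (x ≤ b)) =
      min (b+1) q + ((if q ≤ b then m - q else 0) + (if q + 1 ≤ b then n - m else 0)) := by
  unfold estar
  rw [List.countP_append, List.countP_append, countP_range,
    List.countP_replicate, List.countP_replicate]
  congr 1
  congr 1
  · by_cases h : q ≤ b <;> simp [h]
  · by_cases h : q + 1 ≤ b <;> simp [h]

lemma hgt_wpath {n q m : ℕ} (hqm : q + 1 ≤ m) (b : ℕ) :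
    hgt (wpath n q m) b =
      min (b+1) q + ((if q ≤ b then m - q else 0) + (if q + 1 ≤ b then n - m else 0)) := by
  rw [hgt_countP, eaux_wpath hqm, countP_estar]

lemma bpt_wpath {n q m : ℕ} (hqm : q + 1 ≤ m) (hmn : m ≤ n - 1) (hn : 1 ≤ n) :
    ∀ i, bpt (wpath n q m) i = if i ≤ q then i else if i = q + 1 then m else n := by
  have hqn : q + 2 ≤ n := by omega
  intro i
  induction i with
  | zero => simp [bpt]
  | succ i ih =>
    rw [bpt_succ, hgt_wpath hqm]
    rcases Nat.lt_trichotomy i q with h | h | h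
    · have hbi : bpt (wpath n q m) i = i := by rw [ih, if_pos (by omega)]
      rw [hbi, if_neg (show ¬ q ≤ i by omega), if_neg (show ¬ q + 1 ≤ i by omega),
        if_pos (show i + 1 ≤ q by omega)]
      omega
    · have hbi : bpt (wpath n q m) i = i := by rw [ih, if_pos (by omega)]
      rw [hbi, if_pos (show q ≤ i by omega), if_neg (show ¬ q + 1 ≤ i by omega),
        if_neg (show ¬ i + 1 ≤ q by omega), if_pos (show i + 1 = q + 1 by omega)]
      omega
    · rcases Nat.lt_trichotomy i (q+1) with h' | h' | h'
      · omega
      · subst h'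
        have hbi : bpt (wpath n q m) (q+1) = m := by
          rw [ih, if_neg (by omega), if_pos rfl]
        rw [hbi, if_pos (show q ≤ m by omega), if_pos (show q + 1 ≤ m by omega),
          if_neg (show ¬ q + 1 + 1 ≤ q by omega), if_neg (show ¬ q + 1 + 1 = q + 1 by omega)]
        omega
      · have hbi : bpt (wpath n q m) i = n := by
          rw [ih, if_neg (by omega), if_neg (by omega)]
        rw [hbi, if_pos (show q ≤ n by omega), if_pos (show q + 1 ≤ n by omega),
          if_neg (show ¬ i + 1 ≤ q by omega), if_neg (show ¬ i + 1 = q + 1 by omega)]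
        omega

lemma fb_succ (n q : ℕ) : fb n (q+1) = fb n q + (n - (q+1)) := by
  unfold fb
  rw [Finset.sum_range_succ]

lemma fb_mono {n q q' : ℕ} (h : q ≤ q') : fb n q ≤ fb n q' := by
  unfold fb
  exact Finset.sum_le_sum_of_subset (Finset.range_subset_range.2 h)

lemma fb_top {n : ℕ} (hn : 1 ≤ n) : fb n (n - 1) = n.choose 2 := by
  unfold fb
  rw [← sum_range_id_choose]
  have h1 : ∑ r ∈ Finset.range (n-1), (n - (r+1))
      = ∑ r ∈ Finset.range (n-1), ((fun j => j + 1) ((n - 1) - 1 - r)) := by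
    apply Finset.sum_congr rfl
    intro r hr
    simp only [Finset.mem_range] at hr
    show n - (r + 1) = (n - 1 - 1 - r) + 1
    omega
  rw [h1, Finset.sum_range_reflect (fun j => j + 1) (n - 1)]
  have h2 : ∑ h ∈ Finset.range n, h = (∑ h ∈ Finset.range (n-1), h) + (n - 1) := by
    conv_lhs => rw [show n = (n - 1) + 1 by omega]
    rw [Finset.sum_range_succ]
  rw [h2, Finset.sum_add_distrib]
  simp

lemma bounce_wpath {n q m : ℕ} (hqm : q + 1 ≤ m) (hmn : m ≤ n - 1) (hn : 1 ≤ n) :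
    bounce n (wpath n q m) = fb n q + (n - m) := by
  unfold bounce
  have hbv : ∀ i ∈ Finset.range n, n - bpt (wpath n q m) (i+1)
      = (if i < q then n - (i+1) else 0) + (if i = q then n - m else 0) := by
    intro i _
    rw [bpt_wpath hqm hmn hn]
    rcases Nat.lt_trichotomy i q with h | h | h
    · rw [if_pos (by omega), if_pos h, if_neg (by omega)]
      omega
    · subst h
      rw [if_neg (by omega), if_pos rfl, if_neg (by omega), if_pos rfl]
      omega
    · rw [if_neg (by omega), if_neg (by omega), if_neg (by omega), if_neg (by omega)]
      omega
  rw [Finset.sum_congr rfl hbv, Finset.sum_add_distrib]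
  congr 1
  · rw [← Finset.sum_subset (Finset.range_subset_range.2 (show q ≤ n by omega))
      (fun x _ hx => by rw [if_neg (by simp at hx ⊢; omega)])]
    unfold fb
    apply Finset.sum_congr rfl
    intro i hi
    simp only [Finset.mem_range] at hi
    rw [if_pos hi]
  · rw [Finset.sum_ite_eq' (Finset.range n) q (fun _ => n - m)]
    rw [if_pos (by simp; omega)]

lemma estar_length {n q m : ℕ} (hqm : q + 1 ≤ m) (hmn : m ≤ n - 1) :
    (estar n q m).length = n := by
  unfold estar
  simp [List.length_append]
  omega

lemma getD_estar {n q m : ℕ} (hqm : q + 1 ≤ m) (hmn : m ≤ n - 1) :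
    ∀ h, h < n → (estar n q m).getD h 0 = if m ≤ h then q + 1 else min h q := by
  intro h hh
  have hlen := estar_length (n := n) hqm hmn
  rw [List.getD_eq_getElem _ _ (by omega)]
  unfold estar
  rcases Nat.lt_trichotomy h q with hc | hc | hc
  · rw [List.getElem_append_left (by simpa using hc)]
    rw [List.getElem_range]
    rw [if_neg (by omega)]
    omega
  · subst hc
    rw [List.getElem_append_right (by simp)]
    rw [List.getElem_append_left (by simp; omega)]
    rw [List.getElem_replicate]
    rw [if_neg (by omega)]
    omega
  · by_cases hm : m ≤ h
    · rw [List.getElem_append_right (by simp; omega)]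
      rw [List.getElem_append_right (by simp; omega)]
      rw [List.getElem_replicate]
      rw [if_pos hm]
    · rw [List.getElem_append_right (by simp; omega)]
      rw [List.getElem_append_left (by simp; omega)]
      rw [List.getElem_replicate]
      rw [if_neg hm]
      omega

lemma sum_min {n q : ℕ} (h : q ≤ n) :
    ∑ h ∈ Finset.range n, min h q = fb n q := by
  have step : ∀ h ∈ Finset.range n, min h q
      = ∑ r ∈ Finset.range q, (if r + 1 ≤ h then 1 else 0) := by
    intro h _
    rw [← Finset.card_filter]
    have : (Finset.range q).filter (fun r => r + 1 ≤ h) = Finset.range (min h q) := by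
      ext x
      simp [Finset.mem_filter, Finset.mem_range]
      omega
    rw [this, Finset.card_range]
  rw [Finset.sum_congr rfl step, Finset.sum_comm]
  unfold fb
  apply Finset.sum_congr rfl
  intro r hr
  simp only [Finset.mem_range] at hr
  rw [← Finset.card_filter, filter_ge_card (by omega)]

lemma sum_ite_ge {n m : ℕ} (h : m ≤ n) :
    ∑ h ∈ Finset.range n, (if m ≤ h then 1 else 0) = n - m := by
  rw [← Finset.card_filter, filter_ge_card h]

lemma sumE_estar {n q m : ℕ} (hqm : q + 1 ≤ m) (hmn : m ≤ n - 1) :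
    ∑ h ∈ Finset.range n, (if m ≤ h then q + 1 else min h q) = fb n q + (n - m) := by
  have step : ∀ h ∈ Finset.range n, (if m ≤ h then q + 1 else min h q)
      = min h q + (if m ≤ h then 1 else 0) := by
    intro h _
    split_ifs with hm <;> omega
  rw [Finset.sum_congr rfl step, Finset.sum_add_distrib, sum_min (by omega),
    sum_ite_ge (by omega)]

lemma area_wpath {n q m : ℕ} (hqm : q + 1 ≤ m) (hmn : m ≤ n - 1) (hn : 1 ≤ n) :
    area (wpath n q m) = n.choose 2 - (fb n q + (n - m)) := by
  have hd := wpath_isDyck hqm hmn hn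
  rw [area_eq_sum hd]
  have hE : ∀ h ∈ Finset.range n, (eaux 0 (wpath n q m)).getD h 0
      = if m ≤ h then q + 1 else min h q := by
    intro h hh
    simp only [Finset.mem_range] at hh
    rw [eaux_wpath hqm, getD_estar hqm hmn h hh]
  rw [Finset.sum_congr rfl (fun h hh => by rw [hE h hh])]
  have key : (∑ h ∈ Finset.range n, (h - if m ≤ h then q + 1 else min h q))
      + (∑ h ∈ Finset.range n, (if m ≤ h then q + 1 else min h q))
      = ∑ h ∈ Finset.range n, h := by
    rw [← Finset.sum_add_distrib]
    apply Finset.sum_congr rfl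
    intro h hh
    simp only [Finset.mem_range] at hh
    split_ifs with hm <;> omega
  rw [sumE_estar hqm hmn] at key
  rw [sum_range_id_choose] at key
  omega

theorem stmt13 (n : ℕ) (hn : 3 ≤ n) (t : ℕ) (ht : t = n.choose 2 - 1)
    (j : ℕ) (hj : j ≤ t - 1) :
    ∃! w : List Bool, IsDyck n w ∧ area w = t - j ∧ bounce n w = 1 + j := by
  classical
  have hCsum : ∑ h ∈ Finset.range n, h = n.choose 2 := sum_range_id_choose n
  have hC3 : 3 ≤ n.choose 2 := by
    rw [Nat.choose_two_right]
    have h6 : 3 * 2 ≤ n * (n - 1) := Nat.mul_le_mul (by omega) (by omega)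
    omega
  set C := n.choose 2 with hC
  set k := 1 + j with hk
  have hkub : k ≤ C - 1 := by omega
  have hk1 : 1 ≤ k := by omega
  have hexq : ∃ q, k ≤ fb n (q + 1) := by
    refine ⟨n - 2, ?_⟩
    rw [show n - 2 + 1 = n - 1 by omega, fb_top (by omega)]
    omega
  set q := Nat.find hexq with hqdef
  have hq2 : k ≤ fb n (q + 1) := Nat.find_spec hexq
  have hqle : q ≤ n - 2 := Nat.find_le (by
    rw [show n - 2 + 1 = n - 1 by omega, fb_top (by omega)]
    omega)
  have hq1 : fb n q < k := by
    rcases Nat.eq_zero_or_pos q with h0 | h0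
    · rw [h0]
      have : fb n 0 = 0 := by simp [fb]
      omega
    · have hmin := Nat.find_min hexq (show q - 1 < q by omega)
      rw [show q - 1 + 1 = q by omega] at hmin
      omega
  have hfs : fb n (q + 1) = fb n q + (n - (q + 1)) := fb_succ n q
  set m := n - (k - fb n q) with hm
  have hm1 : q + 1 ≤ m := by omega
  have hm2 : m ≤ n - 1 := by omega
  have hkqm : fb n q + (n - m) = k := by omega
  have hn1 : (1 : ℕ) ≤ n := by omega
  have hd0 := wpath_isDyck hm1 hm2 hn1
  have hb0 := bounce_wpath hm1 hm2 hn1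
  have ha0 := area_wpath hm1 hm2 hn1
  refine ⟨wpath n q m, ⟨hd0, ?_, ?_⟩, ?_⟩
  · rw [ha0, hkqm]
    omega
  · rw [hb0, hkqm]
  · rintro w' ⟨hd', ha', hb'⟩
    have hptle : ∀ h ∈ Finset.range n,
        (h - (eaux 0 w').getD h 0) + cfun n w' h ≤ h := by
      intro h hh
      simp only [Finset.mem_range] at hh
      have h1 := c_le_E hd' hh
      have h2 := E_le_h hd' hh
      omega
    have hsum : ∑ h ∈ Finset.range n, ((h - (eaux 0 w').getD h 0) + cfun n w' h)
        = ∑ h ∈ Finset.range n, h := by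
      rw [Finset.sum_add_distrib, ← area_eq_sum hd', ← bounce_eq_sum_c hd', hCsum]
      omega
    have hpt := (Finset.sum_eq_sum_iff_of_le hptle).1 hsum
    have heq : ∀ h, h < n → (eaux 0 w').getD h 0 = cfun n w' h := by
      intro h hh
      have h1 := c_le_E hd' hh
      have h2 := E_le_h hd' hh
      have h3 := hpt h (Finset.mem_range.2 hh)
      omega
    obtain ⟨q', m', hm1', hm2', hbv', hef'⟩ := structure_of_eq hd' heq (by rw [hb']; omega)
    have hk' : fb n q' + (n - m') = k := by
      unfold fb
      rw [← hbv', hb']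
    have hq'1 : fb n q' < k := by omega
    have hq'2 : k ≤ fb n (q' + 1) := by
      rw [fb_succ]
      omega
    have hqq : q' = q := by
      rcases Nat.lt_trichotomy q' q with h | h | h
      · exfalso
        have := Nat.find_min hexq h
        omega
      · exact h
      · exfalso
        have := fb_mono (n := n) (show q + 1 ≤ q' by omega)
        omega
    rw [hqq] at hk' hef'
    have hmm : m' = m := by omega
    rw [hmm] at hef'
    have hee : eaux 0 w' = eaux 0 (wpath n q m) := by
      rw [eaux_wpath hm1]
      apply List.ext_getElem (by rw [eaux_len_n hd', estar_length hm1 hm2])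
      intro i h1 h2
      have hi : i < n := by
        rw [eaux_len_n hd'] at h1
        exact h1
      rw [← List.getD_eq_getElem (eaux 0 w') 0 h1,
        ← List.getD_eq_getElem (estar n q m) 0 h2,
        hef' i hi, getD_estar hm1 hm2 i hi]
    exact eaux_inj w' (wpath n q m) 0 hee
      (by rw [count_false_eq hd', wpath_count_false hm1 (by omega)])
end

section
/- For a Dyck path π of semilength n with bounce path p_{n,α}, the area of π is at least the area of p_{n,α}, i.e., area(π) ≥ ∑_i C(α_i, 2). -/
namespace S15

def area' (t f : ℕ) : List Bool → ℕ
  | [] => 0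
  | true :: w => (t - f) + area' (t + 1) f w
  | false :: w => area' t (f + 1) w

def areaZ (t f : ℤ) : List Bool → ℤ
  | [] => 0
  | true :: w => (t - f) + areaZ (t + 1) f w
  | false :: w => areaZ t (f + 1) w

lemma foldl_area (w : List Bool) : ∀ (A t f : ℕ),
    (w.foldl (fun (p : ℕ × ℕ × ℕ) s =>
      if s then (p.1 + (p.2.1 - p.2.2), p.2.1 + 1, p.2.2)
      else (p.1, p.2.1, p.2.2 + 1)) (A, t, f)).1 = A + area' t f w := by
  induction w with
  | nil => intros; simp [area']
  | cons s w ih =>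
    intro A t f
    cases s <;> simp [area', ih, Nat.add_assoc]

lemma area'_cast : ∀ (w : List Bool) (t f : ℕ),
    (∀ k, f + (w.take k).count false ≤ t + (w.take k).count true) →
    (area' t f w : ℤ) = areaZ t f w := by
  intro w
  induction w with
  | nil => intros; simp [area', areaZ]
  | cons s w ih =>
    intro t f hc
    cases s with
    | true =>
      have hft : f ≤ t := by simpa using hc 0
      have h' : ∀ k, f + (w.take k).count false ≤ (t + 1) + (w.take k).count true := by
        intro k
        have := hc (k + 1)
        simp [List.count_cons] at this
        omega
      simp [area', areaZ, ih _ _ h', Nat.cast_sub hft]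
    | false =>
      have h' : ∀ k, (f + 1) + (w.take k).count false ≤ t + (w.take k).count true := by
        intro k
        have := hc (k + 1)
        simp [List.count_cons] at this
        omega
      simp [area', areaZ, ih _ _ h']

lemma areaZ_eq : ∀ (w : List Bool) (t f : ℤ),
    areaZ t f w = (w.count true : ℤ) * t - (w.count true : ℤ) * f
      + ((w.count true).choose 2 : ℤ) - (w.count true : ℤ) * (w.count false : ℤ)
      + ∑ b ∈ Finset.range (w.count false), (hgt w b : ℤ) := by
  intro w
  induction w with
  | nil => intros; simp [areaZ]
  | cons s w ih =>
    intro t f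
    cases s with
    | true =>
      have hs : ∀ F : ℕ, ∑ b ∈ Finset.range F, ((hgt w b + 1 : ℕ) : ℤ)
          = (∑ b ∈ Finset.range F, (hgt w b : ℤ)) + F := by
        intro F
        push_cast
        rw [Finset.sum_add_distrib]
        simp
      have hch : ((w.count true + 1).choose 2 : ℤ) = ((w.count true).choose 2 : ℤ) + w.count true := by
        rw [Nat.choose_succ_succ, Nat.choose_one_right, Nat.add_comm]
        push_cast
        ring
      have c1 : (true :: w).count true = w.count true + 1 := by simp
      have c2 : (true :: w).count false = w.count false := by simp
      have c3 : ∀ b, hgt (true :: w) b = hgt w b + 1 := fun b => rfl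
      simp only [areaZ, ih, c1, c2, c3]
      rw [hs, hch]
      push_cast
      ring
    | false =>
      have hs : ∑ b ∈ Finset.range (w.count false + 1), (hgt (false :: w) b : ℤ)
          = ∑ b ∈ Finset.range (w.count false), (hgt w b : ℤ) := by
        rw [Finset.sum_range_succ']
        simp [hgt]
      have c1 : (false :: w).count true = w.count true := by simp
      have c2 : (false :: w).count false = w.count false + 1 := by simp
      simp only [areaZ, ih, c1, c2]
      rw [hs]
      push_cast
      ring

lemma hgt_le_succ (w : List Bool) : ∀ b, hgt w b ≤ hgt w (b + 1) := by
  induction w with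
  | nil => intro b; simp [hgt]
  | cons s w ih =>
    intro b
    cases s with
    | true => simpa [hgt] using ih b
    | false => cases b <;> simp [hgt] <;> first | exact Nat.zero_le _ | exact ih _

lemma hgt_mono (w : List Bool) : Monotone (hgt w) :=
  monotone_nat_of_le_succ (hgt_le_succ w)

lemma hgt_le_count (w : List Bool) : ∀ b, hgt w b ≤ w.count true := by
  induction w with
  | nil => intro b; simp [hgt]
  | cons s w ih =>
    intro b
    cases s with
    | true => simp [hgt, List.count_cons]; exact ih b
    | false =>
      cases b with
      | zero => simp [hgt]
      | succ b => simp [hgt, List.count_cons]; exact le_trans (ih b) (le_refl _)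

lemma hgt_lower : ∀ (w : List Bool) (c b : ℕ),
    (∀ k, (w.take k).count false ≤ (w.take k).count true + c) →
    b + 1 ≤ w.count false → b + 1 ≤ hgt w b + c := by
  intro w
  induction w with
  | nil => intro c b _ hb; simp at hb
  | cons s w ih =>
    intro c b hc hb
    cases s with
    | true =>
      have h' : ∀ k, (w.take k).count false ≤ (w.take k).count true + (c + 1) := by
        intro k
        have := hc (k + 1)
        simp [List.count_cons] at this
        omega
      have hb' : b + 1 ≤ w.count false := by
        simpa [List.count_cons] using hb
      have := ih (c + 1) b h' hb'
      simp [hgt]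
      omega
    | false =>
      have h1 : 1 ≤ c := by
        have := hc 1
        simpa using this
      obtain ⟨c', rfl⟩ : ∃ c', c = c' + 1 := ⟨c - 1, by omega⟩
      cases b with
      | zero => simp [hgt]
      | succ b =>
        have h' : ∀ k, (w.take k).count false ≤ (w.take k).count true + c' := by
          intro k
          have := hc (k + 1)
          simp [List.count_cons] at this
          omega
        have hb' : b + 1 ≤ w.count false := by
          simp [List.count_cons] at hb
          omega
        have := ih c' b h' hb'
        simp [hgt]
        omega

lemma sum_range_id_choose : ∀ m : ℕ, ∑ j ∈ Finset.range m, j = m.choose 2 := by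
  intro m
  induction m with
  | zero => simp
  | succ m ih =>
    rw [Finset.sum_range_succ, ih, Nat.choose_succ_succ, Nat.choose_one_right,
      Nat.add_comm]

lemma sum_Ico_add_choose (a : ℕ) : ∀ m : ℕ,
    (∑ b ∈ Finset.Ico a (a + m), (b + 1)) + m.choose 2 = m * (a + m) := by
  intro m
  induction m with
  | zero => simp
  | succ m ih =>
    rw [show a + (m + 1) = (a + m) + 1 by omega,
      Finset.sum_Ico_succ_top (by omega : a ≤ a + m)]
    have hch : (m + 1).choose 2 = m.choose 2 + m := by
      rw [Nat.choose_succ_succ, Nat.choose_one_right, Nat.add_comm]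
    have hr : (m + 1) * (a + m + 1) = m * (a + m) + a + 2 * m + 1 := by ring
    omega


lemma bpt_succ (w : List Bool) (i : ℕ) : bpt w (i + 1) = hgt w (bpt w i) := by
  simp [bpt, Function.iterate_succ_apply']

lemma bpt_le_succ (w : List Bool) : ∀ i, bpt w i ≤ bpt w (i + 1) := by
  intro i
  induction i with
  | zero => simp [bpt]
  | succ i ih =>
    rw [bpt_succ, bpt_succ]
    exact hgt_mono w ih

lemma bpt_le (w : List Bool) (i : ℕ) : bpt w i ≤ w.count true := by
  cases i with
  | zero => simp [bpt]
  | succ i => rw [bpt_succ]; exact hgt_le_count w _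

lemma sum_intervals (B : ℕ → ℕ) (hB : ∀ i, B i ≤ B (i + 1)) (g : ℕ → ℕ) (m : ℕ) :
    ∑ i ∈ Finset.range m, ∑ b ∈ Finset.Ico (B i) (B (i + 1)), g b
      = ∑ b ∈ Finset.Ico (B 0) (B m), g b := by
  induction m with
  | zero => simp
  | succ m ih =>
    rw [Finset.sum_range_succ, ih,
      Finset.sum_Ico_consecutive _ ((monotone_nat_of_le_succ hB) (Nat.zero_le m)) (hB m)]

lemma count_add_count : ∀ w : List Bool, w.count true + w.count false = w.length := by
  intro w
  induction w with
  | nil => simp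
  | cons s w ih => cases s <;> simp [List.count_cons] <;> omega

end S15

theorem stmt15 (n : ℕ) (π : List Bool) (hπ : IsDyck n π) :
    ∑ i ∈ Finset.range n, (bpt π (i + 1) - bpt π i).choose 2 ≤ area π := by
  obtain ⟨hlen, hct, hpre⟩ := hπ
  have hcf : π.count false = n := by
    have := S15.count_add_count π
    omega
  set B : ℕ → ℕ := fun i => bpt π i with hB
  have hBsucc : ∀ i, B i ≤ B (i + 1) := fun i => S15.bpt_le_succ π i
  have hBn : ∀ i, B i ≤ n := fun i => hct ▸ S15.bpt_le π i
  have hB0 : B 0 = 0 := rfl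
  -- the fundamental area identity (as integers first)
  have harea' : area π = S15.area' 0 0 π := by
    have := S15.foldl_area π 0 0 0
    simpa [area] using this
  have hcond : ∀ k, 0 + (π.take k).count false ≤ 0 + (π.take k).count true := by
    intro k; simpa using hpre k
  have hAZ : (area π : ℤ) = S15.areaZ 0 0 π := by
    rw [harea']; exact S15.area'_cast π 0 0 hcond
  have hAZ2 : (area π : ℤ) = ((n.choose 2 : ℕ) : ℤ) - (n : ℤ) * (n : ℤ)
      + ∑ b ∈ Finset.range n, (hgt π b : ℤ) := by
    rw [hAZ, S15.areaZ_eq, hct, hcf]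
    ring
  -- the area identity over ℕ
  have h2C : 2 * n.choose 2 + n = n * n := by
    have h1 : (∑ i ∈ Finset.range n, i) * 2 = n * (n - 1) := Finset.sum_range_id_mul_two n
    rw [S15.sum_range_id_choose] at h1
    cases n with
    | zero => simp
    | succ m =>
      have hs : (m + 1) - 1 = m := rfl
      rw [hs] at h1
      have h3 : (m + 1) * m + (m + 1) = (m + 1) * (m + 1) := by ring
      omega
  have hsum1 : ∑ b ∈ Finset.range n, (b + 1) = n.choose 2 + n := by
    rw [Finset.sum_add_distrib, S15.sum_range_id_choose]
    simp
  have E : ∑ b ∈ Finset.range n, hgt π b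
      = area π + ∑ b ∈ Finset.range n, (b + 1) := by
    have h2C' : 2 * ((n.choose 2 : ℕ) : ℤ) + (n : ℤ) = (n : ℤ) * (n : ℤ) := by
      exact_mod_cast congrArg (Nat.cast : ℕ → ℤ) h2C
    have hz : (∑ b ∈ Finset.range n, (hgt π b : ℤ))
        = (area π : ℤ) + ((n.choose 2 : ℕ) : ℤ) + (n : ℤ) := by
      linarith [hAZ2]
    have hn : ∑ b ∈ Finset.range n, hgt π b = area π + n.choose 2 + n := by
      exact_mod_cast hz
    rw [hsum1]
    omega
  -- per-interval estimate
  have hint : ∀ i, (B (i + 1) - B i).choose 2 + ∑ b ∈ Finset.Ico (B i) (B (i + 1)), (b + 1)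
      ≤ ∑ b ∈ Finset.Ico (B i) (B (i + 1)), hgt π b := by
    intro i
    set a := B i
    set c := B (i + 1) with hc
    have hac : a ≤ c := hBsucc i
    have hhc : hgt π a = c := (S15.bpt_succ π i).symm
    have hlow : ∀ b ∈ Finset.Ico a c, c ≤ hgt π b := by
      intro b hb
      rw [Finset.mem_Ico] at hb
      calc c = hgt π a := hhc.symm
        _ ≤ hgt π b := S15.hgt_mono π hb.1
    have h1 : ∑ b ∈ Finset.Ico a c, c ≤ ∑ b ∈ Finset.Ico a c, hgt π b :=
      Finset.sum_le_sum hlow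
    have h2 : ∑ b ∈ Finset.Ico a c, c = (c - a) * c := by
      rw [Finset.sum_const, Nat.card_Ico, smul_eq_mul]
    have h3 : (∑ b ∈ Finset.Ico a (a + (c - a)), (b + 1)) + (c - a).choose 2
        = (c - a) * (a + (c - a)) := S15.sum_Ico_add_choose a (c - a)
    rw [show a + (c - a) = c by omega] at h3
    omega
  -- sum the per-interval estimates
  have hsumint : (∑ i ∈ Finset.range n, (B (i + 1) - B i).choose 2)
      + ∑ b ∈ Finset.Ico 0 (B n), (b + 1)
      ≤ ∑ b ∈ Finset.Ico 0 (B n), hgt π b := by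
    have := Finset.sum_le_sum (fun i (_ : i ∈ Finset.range n) => hint i)
    rw [Finset.sum_add_distrib] at this
    rw [S15.sum_intervals B hBsucc (fun b => b + 1) n,
      S15.sum_intervals B hBsucc (hgt π) n, hB0] at this
    exact this
  -- the tail of the range
  have htail : ∑ b ∈ Finset.Ico (B n) n, (b + 1) ≤ ∑ b ∈ Finset.Ico (B n) n, hgt π b := by
    apply Finset.sum_le_sum
    intro b hb
    rw [Finset.mem_Ico] at hb
    have hcond0 : ∀ k, (π.take k).count false ≤ (π.take k).count true + 0 := by
      intro k; simpa using hpre k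
    have := S15.hgt_lower π 0 b hcond0 (by omega)
    omega
  have hsplit1 : ∑ b ∈ Finset.Ico 0 (B n), (b + 1) + ∑ b ∈ Finset.Ico (B n) n, (b + 1)
      = ∑ b ∈ Finset.range n, (b + 1) := by
    rw [Finset.range_eq_Ico]
    exact Finset.sum_Ico_consecutive _ (Nat.zero_le _) (hBn n)
  have hsplit2 : ∑ b ∈ Finset.Ico 0 (B n), hgt π b + ∑ b ∈ Finset.Ico (B n) n, hgt π b
      = ∑ b ∈ Finset.range n, hgt π b := by
    rw [Finset.range_eq_Ico]
    exact Finset.sum_Ico_consecutive _ (Nat.zero_le _) (hBn n)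
  have hx : ∀ i, B i = bpt π i := fun i => rfl
  simp only [hx] at hsumint htail hsplit1 hsplit2
  omega
end
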